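/- Let ε > 0 and κ ∈ ℂ with Re κ > 0. The function f_{ε,κ} is continuous on ℝ, square-integrable, twice differentiable on ℝ∖{-ε, ε} with f_{ε,κ}''(x) = κ²·f_{ε,κ}(x) for every x ∉ {-ε, ε}, its one-sided derivatives at ±ε exist, the jump condition f_{ε,κ}'(-ε⁺) - f_{ε,κ}'(-ε⁻) = α₋·f_{ε,κ}(-ε) holds, and the jump condition f_{ε,κ}'(ε⁺) - f_{ε,κ}'(ε⁻) = α₊·f_{ε,κ}(ε) holds if and only if κ satisfies the transcendental equation (α₊+2κ)(α₋+2κ) = α₊α₋·e^{-4κε}. -/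

import Mathlib

/-!
On each of the intervals `(-∞, -ε)`, `(-ε, ε)`, `(ε, ∞)` the function is a combination of
`e^{±κx}`, so `f'' = κ² f` there and each one-sided derivative at `±ε` is the derivative of the
adjacent exponential combination. The coefficients `c₁, c₂, c₃` are exactly those making `f`
continuous at `±ε` with derivative jump `α₋ f(-ε)` at `-ε`; decay on both half-lines comes from
`Re κ > 0`. Writing `E = e^{κε}`, the defect of the jump condition at `ε` factors as
`f'(ε⁺) - f'(ε⁻) - α₊ f(ε) = -(E / 2κ) ((α₊ + 2κ)(α₋ + 2κ) - α₊α₋ E⁻⁴)`.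
-/

open MeasureTheory Set Filter Topology

noncomputable section

def threePiece {β : Type*} (ε : ℝ) (L M R : ℝ → β) (x : ℝ) : β :=
  if x < -ε then L x else if x ≤ ε then M x else R x

section ThreePiece

variable {β : Type*} {ε x : ℝ} {L M R : ℝ → β}

theorem threePiece_of_lt (h : x < -ε) : threePiece ε L M R x = L x := if_pos h

theorem threePiece_of_mem_Icc (h : x ∈ Icc (-ε) ε) : threePiece ε L M R x = M x := by
  simp [threePiece, not_lt.2 h.1, h.2]

theorem threePiece_of_gt (hε : 0 ≤ ε) (h : ε < x) : threePiece ε L M R x = R x := by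
  simp [threePiece, not_lt.2 (by linarith : -ε ≤ x), not_le.2 h]

theorem threePiece_neg (hε : 0 ≤ ε) : threePiece ε L M R (-ε) = M (-ε) :=
  threePiece_of_mem_Icc ⟨le_rfl, by linarith⟩

theorem threePiece_self (hε : 0 ≤ ε) : threePiece ε L M R ε = M ε :=
  threePiece_of_mem_Icc ⟨by linarith, le_rfl⟩

theorem threePiece_eventuallyEq_left (h : x < -ε) : threePiece ε L M R =ᶠ[𝓝 x] L :=
  eventually_of_mem (Iio_mem_nhds h) fun _ hy => threePiece_of_lt hy

theorem threePiece_eventuallyEq_mid (h : x ∈ Ioo (-ε) ε) : threePiece ε L M R =ᶠ[𝓝 x] M :=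
  eventually_of_mem (Ioo_mem_nhds h.1 h.2) fun _ hy => threePiece_of_mem_Icc (Ioo_subset_Icc_self hy)

theorem threePiece_eventuallyEq_right (hε : 0 ≤ ε) (h : ε < x) : threePiece ε L M R =ᶠ[𝓝 x] R :=
  eventually_of_mem (Ioi_mem_nhds h) fun _ hy => threePiece_of_gt hε hy

theorem threePiece_eventuallyEq_nhdsLT_neg : threePiece ε L M R =ᶠ[𝓝[<] (-ε)] L :=
  eventually_mem_nhdsWithin.mono fun _ hy => threePiece_of_lt hy

theorem threePiece_eventuallyEq_nhdsGT_neg (hε : 0 < ε) : threePiece ε L M R =ᶠ[𝓝[>] (-ε)] M :=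
  eventually_of_mem (Ioo_mem_nhdsGT (by linarith : -ε < ε)) fun _ hy =>
    threePiece_of_mem_Icc (Ioo_subset_Icc_self hy)

theorem threePiece_eventuallyEq_nhdsLT_pos (hε : 0 < ε) : threePiece ε L M R =ᶠ[𝓝[<] ε] M :=
  eventually_of_mem (Ioo_mem_nhdsLT (by linarith : -ε < ε)) fun _ hy =>
    threePiece_of_mem_Icc (Ioo_subset_Icc_self hy)

theorem threePiece_eventuallyEq_nhdsGT_pos (hε : 0 ≤ ε) : threePiece ε L M R =ᶠ[𝓝[>] ε] R :=
  eventually_mem_nhdsWithin.mono fun _ hy => threePiece_of_gt hε hy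

theorem Continuous.threePiece [TopologicalSpace β] (hL : Continuous L) (hM : Continuous M)
    (hR : Continuous R) (hε : 0 ≤ ε) (hLM : L (-ε) = M (-ε)) (hMR : M ε = R ε) :
    Continuous (threePiece ε L M R) := by
  have hMR' : Continuous fun x => if x ≤ ε then M x else R x :=
    hM.if_le hR continuous_id continuous_const fun x hx => hx ▸ hMR
  unfold _root_.threePiece
  simp_rw [← not_le, ite_not]
  refine hMR'.if_le hL continuous_const continuous_id fun x hx => ?_
  rw [← hx, if_pos (by linarith), hLM]

end ThreePiece

section OneSidedDerivatives

variable {F : Type*} [NormedAddCommGroup F] [NormedSpace ℝ F] {ε : ℝ} {L M R : ℝ → F} {D : F}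

theorem HasDerivAt.threePiece_Iio_neg (hL : HasDerivAt L D (-ε)) (hε : 0 ≤ ε)
    (hLM : L (-ε) = M (-ε)) : HasDerivWithinAt (threePiece ε L M R) D (Iio (-ε)) (-ε) :=
  hL.hasDerivWithinAt.congr_of_eventuallyEq threePiece_eventuallyEq_nhdsLT_neg
    (by rw [threePiece_neg hε, hLM])

theorem HasDerivAt.threePiece_Ioi_neg (hM : HasDerivAt M D (-ε)) (hε : 0 < ε) :
    HasDerivWithinAt (threePiece ε L M R) D (Ioi (-ε)) (-ε) :=
  hM.hasDerivWithinAt.congr_of_eventuallyEq (threePiece_eventuallyEq_nhdsGT_neg hε)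
    (threePiece_neg hε.le)

theorem HasDerivAt.threePiece_Iio_pos (hM : HasDerivAt M D ε) (hε : 0 < ε) :
    HasDerivWithinAt (threePiece ε L M R) D (Iio ε) ε :=
  hM.hasDerivWithinAt.congr_of_eventuallyEq (threePiece_eventuallyEq_nhdsLT_pos hε)
    (threePiece_self hε.le)

theorem HasDerivAt.threePiece_Ioi_pos (hR : HasDerivAt R D ε) (hε : 0 ≤ ε) (hMR : M ε = R ε) :
    HasDerivWithinAt (threePiece ε L M R) D (Ioi ε) ε :=
  hR.hasDerivWithinAt.congr_of_eventuallyEq (threePiece_eventuallyEq_nhdsGT_pos hε)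
    (by rw [threePiece_self hε, hMR])

end OneSidedDerivatives

theorem memLp_two_threePiece {F : Type*} [NormedAddCommGroup F] {ε : ℝ} {L M R : ℝ → F}
    (hε : 0 ≤ ε) (hf : Continuous (threePiece ε L M R))
    (hL : IntegrableOn (fun x => ‖L x‖ ^ 2) (Iio (-ε)))
    (hR : IntegrableOn (fun x => ‖R x‖ ^ 2) (Ioi ε)) :
    MemLp (threePiece ε L M R) 2 := by
  rw [memLp_two_iff_integrable_sq_norm hf.aestronglyMeasurable, ← integrableOn_univ,
    ← Iio_union_Ici, ← Icc_union_Ioi_eq_Ici (neg_le_self hε)]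
  refine (hL.congr_fun (fun x hx => ?_) measurableSet_Iio).union
    ((by fun_prop : Continuous fun x => ‖threePiece ε L M R x‖ ^ 2).integrableOn_Icc.union (hR.congr_fun (fun x hx => ?_) measurableSet_Ioi))
  · rw [threePiece_of_lt hx]
  · rw [threePiece_of_gt hε hx]

def SolvesODEAt (κ : ℂ) (f : ℝ → ℂ) (x : ℝ) : Prop :=
  DifferentiableAt ℝ f x ∧ DifferentiableAt ℝ (deriv f) x ∧ deriv (deriv f) x = κ ^ 2 * f x

theorem SolvesODEAt.congr_of_eventuallyEq {κ : ℂ} {f g : ℝ → ℂ} {x : ℝ} (h : SolvesODEAt κ g x)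
    (hfg : f =ᶠ[𝓝 x] g) : SolvesODEAt κ f x := by
  obtain ⟨hd, hd', hdd⟩ := h
  refine ⟨hd.congr_of_eventuallyEq hfg, hd'.congr_of_eventuallyEq hfg.deriv, ?_⟩
  rw [hfg.deriv.deriv_eq, hdd, hfg.eq_of_nhds]

theorem solvesODEAt_threePiece {κ : ℂ} {ε x : ℝ} {L M R : ℝ → ℂ} (hL : ∀ y, SolvesODEAt κ L y)
    (hM : ∀ y, SolvesODEAt κ M y) (hR : ∀ y, SolvesODEAt κ R y) (hε : 0 ≤ ε)
    (h₁ : x ≠ -ε) (h₂ : x ≠ ε) : SolvesODEAt κ (threePiece ε L M R) x := by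
  rcases h₁.lt_or_gt with h₁ | h₁
  · exact (hL x).congr_of_eventuallyEq (threePiece_eventuallyEq_left h₁)
  rcases h₂.lt_or_gt with h₂ | h₂
  · exact (hM x).congr_of_eventuallyEq (threePiece_eventuallyEq_mid ⟨h₁, h₂⟩)
  · exact (hR x).congr_of_eventuallyEq (threePiece_eventuallyEq_right hε h₂)

def expCombo (κ a b : ℂ) (x : ℝ) : ℂ := a * Complex.exp (-κ * x) + b * Complex.exp (κ * x)

section ExpCombo

variable (κ a b : ℂ)

theorem hasDerivAt_expCombo (x : ℝ) :
    HasDerivAt (expCombo κ a b) (expCombo κ (-κ * a) (κ * b) x) x := by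
  have hexp (c : ℂ) : HasDerivAt (fun y : ℝ => Complex.exp (c * y)) (Complex.exp (c * x) * c) x := by
    simpa using ((hasDerivAt_id x).ofReal_comp.const_mul c).cexp
  refine (((hexp (-κ)).const_mul a).add ((hexp κ).const_mul b)).congr_deriv ?_
  simp only [expCombo]
  ring

theorem differentiable_expCombo : Differentiable ℝ (expCombo κ a b) :=
  fun x => (hasDerivAt_expCombo κ a b x).differentiableAt

theorem deriv_expCombo : deriv (expCombo κ a b) = expCombo κ (-κ * a) (κ * b) :=
  funext fun x => (hasDerivAt_expCombo κ a b x).deriv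

theorem solvesODEAt_expCombo (x : ℝ) : SolvesODEAt κ (expCombo κ a b) x := by
  refine ⟨differentiable_expCombo κ a b x, ?_, ?_⟩
  · rw [deriv_expCombo]
    exact differentiable_expCombo _ _ _ x
  · simp only [deriv_expCombo, expCombo]
    ring

variable {κ}

theorem integrableOn_sq_norm_expCombo_Iio (hκ : 0 < κ.re) (c : ℝ) :
    IntegrableOn (fun x => ‖expCombo κ 0 b x‖ ^ 2) (Iio c) := by
  have h : IntegrableOn (fun x : ℝ => ‖b‖ ^ 2 * ‖Complex.exp (2 * κ * x)‖) (Iio c) :=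
    IntegrableOn.mono_set ((integrableOn_exp_mul_complex_Iic (by simpa) c).norm.const_mul _)
      Iio_subset_Iic_self
  refine h.congr_fun (fun x _ => ?_) measurableSet_Iio
  simp only [expCombo, zero_mul, zero_add, norm_mul, mul_pow, ← norm_pow, ← Complex.exp_nat_mul]
  ring_nf

theorem integrableOn_sq_norm_expCombo_Ioi (hκ : 0 < κ.re) (c : ℝ) :
    IntegrableOn (fun x => ‖expCombo κ a 0 x‖ ^ 2) (Ioi c) := by
  have h : IntegrableOn (fun x : ℝ => ‖a‖ ^ 2 * ‖Complex.exp (-2 * κ * x)‖) (Ioi c) :=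
    (integrableOn_exp_mul_complex_Ioi (by simpa) c).norm.const_mul _
  refine h.congr_fun (fun x _ => ?_) measurableSet_Ioi
  simp only [expCombo, zero_mul, add_zero, norm_mul, mul_pow, ← norm_pow, ← Complex.exp_nat_mul]
  ring_nf

theorem expCombo_apply (x : ℝ) :
    expCombo κ a b x = a * (Complex.exp (κ * x))⁻¹ + b * Complex.exp (κ * x) := by
  rw [expCombo, neg_mul, Complex.exp_neg]

theorem expCombo_apply_neg (x : ℝ) :
    expCombo κ a b (-x) = a * Complex.exp (κ * x) + b * (Complex.exp (κ * x))⁻¹ := by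
  rw [expCombo, Complex.ofReal_neg, neg_mul_neg, mul_neg, Complex.exp_neg]

end ExpCombo

theorem Complex.exp_int_mul_mul (n : ℤ) (z w : ℂ) :
    Complex.exp (n * z * w) = Complex.exp (z * w) ^ n := by
  rw [mul_assoc, Complex.exp_int_mul]

namespace TwoDelta

def c₁ (αm κ : ℂ) (ε : ℝ) : ℂ := -(αm / (2 * κ)) * Complex.exp (-2 * κ * ε)

def c₂ (αm κ : ℂ) : ℂ := (αm + 2 * κ) / (2 * κ)

def c₃ (αm κ : ℂ) (ε : ℝ) : ℂ :=
  Complex.exp (2 * κ * ε) + (αm / (2 * κ)) * (Complex.exp (2 * κ * ε) - Complex.exp (-2 * κ * ε))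

variable (αp αm : ℂ) {κ : ℂ} (ε : ℝ)

theorem c₁_eq : c₁ αm κ ε = -(αm / (2 * κ)) * (Complex.exp (κ * ε) ^ 2)⁻¹ := by
  have := Complex.exp_int_mul_mul (-2) κ ε
  push_cast at this
  rw [c₁, this]
  simp

theorem c₃_eq : c₃ αm κ ε = Complex.exp (κ * ε) ^ 2 +
    (αm / (2 * κ)) * (Complex.exp (κ * ε) ^ 2 - (Complex.exp (κ * ε) ^ 2)⁻¹) := by
  have h₂ := Complex.exp_int_mul_mul 2 κ ε
  have hneg₂ := Complex.exp_int_mul_mul (-2) κ ε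
  push_cast at h₂ hneg₂
  rw [c₃, h₂, hneg₂]
  simp

variable {αm}

theorem left_eq_mid (hκ : κ ≠ 0) :
    expCombo κ 0 1 (-ε) = expCombo κ (c₁ αm κ ε) (c₂ αm κ) (-ε) := by
  rw [expCombo_apply_neg, expCombo_apply_neg, c₁_eq, c₂]
  field_simp
  ring

theorem mid_eq_right (hκ : κ ≠ 0) :
    expCombo κ (c₁ αm κ ε) (c₂ αm κ) ε = expCombo κ (c₃ αm κ ε) 0 ε := by
  rw [expCombo_apply, expCombo_apply, c₁_eq, c₂, c₃_eq]
  field_simp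
  ring

theorem jump_neg (hκ : κ ≠ 0) :
    expCombo κ (-κ * c₁ αm κ ε) (κ * c₂ αm κ) (-ε) - expCombo κ (-κ * 0) (κ * 1) (-ε) =
      αm * expCombo κ (c₁ αm κ ε) (c₂ αm κ) (-ε) := by
  simp only [expCombo_apply_neg, c₁_eq, c₂]
  field_simp
  ring

theorem jump_pos_sub_eq (hκ : κ ≠ 0) :
    expCombo κ (-κ * c₃ αm κ ε) (κ * 0) ε - expCombo κ (-κ * c₁ αm κ ε) (κ * c₂ αm κ) ε -
        αp * expCombo κ (c₁ αm κ ε) (c₂ αm κ) ε =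
      -(Complex.exp (κ * ε) / (2 * κ)) *
        ((αp + 2 * κ) * (αm + 2 * κ) - αp * αm * Complex.exp (-4 * κ * ε)) := by
  have hneg₄ := Complex.exp_int_mul_mul (-4) κ ε
  push_cast at hneg₄
  simp only [expCombo_apply, c₁_eq, c₂, c₃_eq, hneg₄]
  field_simp
  ring

theorem jump_pos_iff (hκ : κ ≠ 0) :
    expCombo κ (-κ * c₃ αm κ ε) (κ * 0) ε - expCombo κ (-κ * c₁ αm κ ε) (κ * c₂ αm κ) ε =
        αp * expCombo κ (c₁ αm κ ε) (c₂ αm κ) ε ↔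
      (αp + 2 * κ) * (αm + 2 * κ) = αp * αm * Complex.exp (-4 * κ * ε) := by
  rw [← sub_eq_zero, jump_pos_sub_eq αp ε hκ, mul_eq_zero, sub_eq_zero, or_iff_right]
  simp [hκ, Complex.exp_ne_zero]

end TwoDelta

end

theorem stmt_4 (αp αm : ℂ) (ε : ℝ) (hε : 0 < ε) (κ : ℂ) (hκ : 0 < κ.re) :
    let c₁ : ℂ := -(αm / (2 * κ)) * Complex.exp (-2 * κ * ε)
    let c₂ : ℂ := (αm + 2 * κ) / (2 * κ)
    let c₃ : ℂ := Complex.exp (2 * κ * ε) +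
      (αm / (2 * κ)) * (Complex.exp (2 * κ * ε) - Complex.exp (-2 * κ * ε))
    let f : ℝ → ℂ := fun x =>
      if x < -ε then Complex.exp (κ * x)
      else if x ≤ ε then c₁ * Complex.exp (-κ * x) + c₂ * Complex.exp (κ * x)
      else c₃ * Complex.exp (-κ * x)
    Continuous f ∧
    MemLp f 2 (volume : Measure ℝ) ∧
    (∀ x : ℝ, x ≠ -ε → x ≠ ε →
      DifferentiableAt ℝ f x ∧ DifferentiableAt ℝ (deriv f) x ∧
        deriv (deriv f) x = κ ^ 2 * f x) ∧
    ∃ Dmp Dmm Dpp Dpm : ℂ,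
      HasDerivWithinAt f Dmp (Ioi (-ε)) (-ε) ∧ HasDerivWithinAt f Dmm (Iio (-ε)) (-ε) ∧
      HasDerivWithinAt f Dpp (Ioi ε) ε ∧ HasDerivWithinAt f Dpm (Iio ε) ε ∧
      Dmp - Dmm = αm * f (-ε) ∧
      ((Dpp - Dpm = αp * f ε) ↔
        (αp + 2 * κ) * (αm + 2 * κ) = αp * αm * Complex.exp (-4 * κ * ε)) := by
  intro c₁ c₂ c₃ f
  have hκ₀ : κ ≠ 0 := by
    rintro rfl
    simp at hκ
  have hf : f = threePiece ε (expCombo κ 0 1) (expCombo κ c₁ c₂) (expCombo κ c₃ 0) := by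
    funext x
    simp only [f, threePiece, expCombo]
    split_ifs <;> ring
  have hLM : expCombo κ 0 1 (-ε) = expCombo κ c₁ c₂ (-ε) := TwoDelta.left_eq_mid ε hκ₀
  have hMR : expCombo κ c₁ c₂ ε = expCombo κ c₃ 0 ε := TwoDelta.mid_eq_right ε hκ₀
  have hcont := (differentiable_expCombo κ 0 1).continuous.threePiece
    (differentiable_expCombo κ c₁ c₂).continuous (differentiable_expCombo κ c₃ 0).continuous
    hε.le hLM hMR
  rw [hf, threePiece_neg hε.le, threePiece_self hε.le]
  refine ⟨hcont, memLp_two_threePiece hε.le hcont (integrableOn_sq_norm_expCombo_Iio 1 hκ _)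
      (integrableOn_sq_norm_expCombo_Ioi c₃ hκ _),
    fun x h₁ h₂ => solvesODEAt_threePiece (solvesODEAt_expCombo κ 0 1)
      (solvesODEAt_expCombo κ c₁ c₂) (solvesODEAt_expCombo κ c₃ 0) hε.le h₁ h₂,
    _, _, _, _, (hasDerivAt_expCombo κ c₁ c₂ _).threePiece_Ioi_neg hε,
    (hasDerivAt_expCombo κ 0 1 _).threePiece_Iio_neg hε.le hLM,
    (hasDerivAt_expCombo κ c₃ 0 _).threePiece_Ioi_pos hε.le hMR,
    (hasDerivAt_expCombo κ c₁ c₂ _).threePiece_Iio_pos hε,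
    TwoDelta.jump_neg ε hκ₀, TwoDelta.jump_pos_iff αp ε hκ₀⟩
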